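/- Let B be a K-acceptor for a timed language L. Then the state equivalence ≈^B coincides with ≈^{L,K} on all timed words if and only if for all half-integral words u, v ∈ (Σ_K)* which are small w.r.t. K: u ≈^B v if and only if u ≈^{L,K} v. -/

import Mathlib

open scoped NNReal Classical

namespace IRTA

/-- A timestamp is a finite sequence of non-negative reals. -/
abbrev Timestamp : Type := List ℝ≥0

/-- A timed word is a finite sequence of (delay, letter) pairs. -/
abbrev TimedWord (A : Type) : Type := List (ℝ≥0 × A)

/-- Fractional part of a non-negative real. -/
noncomputable def fracPart (x : ℝ≥0) : ℝ≥0 := x - (⌊x⌋₊ : ℝ≥0)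

/-- `x` is a natural-number value. -/
def IsNatVal (x : ℝ≥0) : Prop := ∃ m : ℕ, x = (m : ℝ≥0)

/-- Region equivalence `≡^K`. -/
def RegEq (K : ℕ) (x y : ℝ≥0) : Prop :=
  (⌊x⌋₊ = ⌊y⌋₊ ∧ (fracPart x = 0 ↔ fracPart y = 0)) ∨ ((K : ℝ≥0) < x ∧ (K : ℝ≥0) < y)

/-- One step of the (greedy) clock evolution: reset whenever the value is an
integer between `0` and `K`. -/
noncomputable def resetStep (K : ℕ) (v : ℝ≥0) : ℝ≥0 :=
  if ∃ m : ℕ, m ≤ K ∧ v = (m : ℝ≥0) then 0 else v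

/-- Auxiliary function computing `c^K` with accumulator `v`. -/
noncomputable def cKAux (K : ℕ) : ℝ≥0 → Timestamp → ℝ≥0
  | v, [] => v
  | v, t :: d => cKAux K (resetStep K (v + t)) d

/-- `c^K(d)`: the sum of the delays after the last integral position of `d`. -/
noncomputable def cK (K : ℕ) (d : Timestamp) : ℝ≥0 := cKAux K 0 d

/-- `c^K` of a timed word is `c^K` of its timestamp. -/
noncomputable def cKW {A : Type} (K : ℕ) (w : TimedWord A) : ℝ≥0 :=
  cK K (w.map Prod.fst)

/-- `c^K_⊤` : `c^K` truncated at `K`. -/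
noncomputable def cKTop {A : Type} (K : ℕ) (w : TimedWord A) : WithTop ℝ≥0 :=
  if cKW K w ≤ (K : ℝ≥0) then ((cKW K w : ℝ≥0) : WithTop ℝ≥0) else ⊤

/-! ### Clock constraints and one-clock timed automata -/

/-- Clock constraints `φ ::= x < m | m < x | x = m | φ ∧ φ`. -/
inductive CC : Type where
  | lt : ℕ → CC
  | gt : ℕ → CC
  | eq : ℕ → CC
  | and : CC → CC → CC

/-- Satisfaction of a clock constraint by a clock value. -/
def CC.sat : CC → ℝ≥0 → Prop
  | .lt m, x => x < (m : ℝ≥0)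
  | .gt m, x => (m : ℝ≥0) < x
  | .eq m, x => x = (m : ℝ≥0)
  | .and φ ψ, x => φ.sat x ∧ ψ.sat x

/-- The largest constant appearing in a clock constraint. -/
def CC.maxConst : CC → ℕ
  | .lt m => m
  | .gt m => m
  | .eq m => m
  | .and φ ψ => max φ.maxConst ψ.maxConst

/-- A transition of a one-clock timed automaton; `reset = true` means the
clock is reset (the `r = 0` case). -/
structure TTrans (Q A : Type) where
  src : Q
  dst : Q
  lab : A
  guard : CC
  reset : Bool

/-- A one-clock timed automaton. -/
structure TA (A : Type) where
  Q : Type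
  init : Q
  final : Set Q
  trans : Set (TTrans Q A)

/-- The automaton has finitely many states and transitions. -/
def TA.IsFinite {A : Type} (M : TA A) : Prop := Finite M.Q ∧ M.trans.Finite

/-- Runs of a one-clock timed automaton between configurations. -/
inductive Steps {A : Type} (M : TA A) : M.Q × ℝ≥0 → TimedWord A → M.Q × ℝ≥0 → Prop
  | nil (c : M.Q × ℝ≥0) : Steps M c [] c
  | cons {q : M.Q} {ν t : ℝ≥0} {a : A} {w : TimedWord A} {c : M.Q × ℝ≥0}
      (θ : TTrans M.Q A) (hθ : θ ∈ M.trans) (hsrc : θ.src = q) (hlab : θ.lab = a)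
      (hg : θ.guard.sat (ν + t))
      (hrest : Steps M (θ.dst, if θ.reset then 0 else ν + t) w c) :
      Steps M (q, ν) ((t, a) :: w) c

/-- The language of `M` from a given configuration. -/
def TA.LangFrom {A : Type} (M : TA A) (c : M.Q × ℝ≥0) : Set (TimedWord A) :=
  {w | ∃ q' : M.Q, ∃ ν' : ℝ≥0, Steps M c w (q', ν') ∧ q' ∈ M.final}

/-- The language of `M` (from the initial configuration). -/
def TA.Lang {A : Type} (M : TA A) : Set (TimedWord A) := M.LangFrom (M.init, 0)

/-- Determinism: distinct transitions with the same source and letter have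
disjoint guards. -/
def TA.Deterministic {A : Type} (M : TA A) : Prop :=
  ∀ θ₁ ∈ M.trans, ∀ θ₂ ∈ M.trans, θ₁ ≠ θ₂ → θ₁.src = θ₂.src → θ₁.lab = θ₂.lab →
    ∀ x : ℝ≥0, ¬ (θ₁.guard.sat x ∧ θ₂.guard.sat x)

/-- Completeness: every timed word admits a run from the initial configuration. -/
def TA.Complete {A : Type} (M : TA A) : Prop :=
  ∀ w : TimedWord A, ∃ c : M.Q × ℝ≥0, Steps M (M.init, 0) w c

/-- A 1-IRTA: every resetting transition has an equality guard. -/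
def TA.IsIRTA {A : Type} (M : TA A) : Prop :=
  ∀ θ ∈ M.trans, θ.reset = true → ∃ m : ℕ, θ.guard = CC.eq m

/-- Guards allowed in a strict 1-IRTA with constant `K`. -/
def StrictGuard (K : ℕ) (φ : CC) : Prop :=
  (∃ m : ℕ, φ = CC.eq m) ∨ (∃ m : ℕ, φ = CC.and (CC.gt m) (CC.lt (m + 1))) ∨ φ = CC.gt K

/-- Strictness with constant `K`: every guard is of one of the allowed forms
and a guard is an equality iff the transition resets. -/
def TA.IsStrict {A : Type} (M : TA A) (K : ℕ) : Prop :=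
  ∀ θ ∈ M.trans, StrictGuard K θ.guard ∧ ((∃ m : ℕ, θ.guard = CC.eq m) ↔ θ.reset = true)

/-- All constants appearing in guards are at most `K`. -/
def TA.MaxConstLE {A : Type} (M : TA A) (K : ℕ) : Prop :=
  ∀ θ ∈ M.trans, θ.guard.maxConst ≤ K

/-- `M` reaches the same control state on reading `u` and `v` from the initial
configuration. -/
def TA.SameState {A : Type} (M : TA A) (u v : TimedWord A) : Prop :=
  ∃ q : M.Q, ∃ ν ν' : ℝ≥0, Steps M (M.init, 0) u (q, ν) ∧ Steps M (M.init, 0) v (q, ν')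

/-- A `K`-acceptor. -/
def IsKAcceptor {A : Type} (M : TA A) (K : ℕ) : Prop :=
  M.IsFinite ∧ M.Complete ∧ M.Deterministic ∧ M.IsIRTA ∧ M.IsStrict K ∧ M.MaxConstLE K ∧
    ∀ u v : TimedWord A, M.SameState u v → RegEq K (cKW K u) (cKW K v)

/-! ### Equivalences on timed words -/

/-- `L`-preservation of a relation on timed words. -/
def LPreserving {A : Type} (L : Set (TimedWord A)) (r : TimedWord A → TimedWord A → Prop) :
    Prop :=
  ∀ u v : TimedWord A, r u v → (u ∈ L ↔ v ∈ L)

/-- `K`-monotonicity of a relation on timed words. -/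
def KMonotonic {A : Type} (K : ℕ) (r : TimedWord A → TimedWord A → Prop) : Prop :=
  ∀ u v : TimedWord A, r u v →
    RegEq K (cKW K u) (cKW K v) ∧
      ∀ (a : A) (t t' : ℝ≥0), RegEq K (cKW K u + t) (cKW K v + t') →
        r (u ++ [(t, a)]) (v ++ [(t', a)])

/-- Finite index: there are finitely many classes `{v | r u v}`. -/
def FiniteIndex {A : Type} (r : TimedWord A → TimedWord A → Prop) : Prop :=
  Set.Finite (Set.range fun u : TimedWord A => {v : TimedWord A | r u v})

/-! ### The rescaling maps -/

/-- The bijection `f_{λ→λ'}` of the open unit interval. -/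
noncomputable def fScale (lam lam' t : ℝ≥0) : ℝ≥0 :=
  if t ≤ lam then (lam' / lam) * t else lam' + ((1 - lam') / (1 - lam)) * (t - lam)

/-- The new delay `t'` computed from the current clock values `y, y'` and delay `t`. -/
noncomputable def tauStep (K : ℕ) (y y' t : ℝ≥0) : ℝ≥0 :=
  if (IsNatVal y ∧ IsNatVal y') ∨ ((K : ℝ≥0) < y ∧ (K : ℝ≥0) < y') then t
  else (⌊t⌋₊ : ℝ≥0) + fScale (1 - fracPart y) (1 - fracPart y') (fracPart t)

/-- Auxiliary rescaling map on timestamps, carrying the current clock values. -/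
noncomputable def tauAux (K : ℕ) : ℝ≥0 → ℝ≥0 → Timestamp → Timestamp
  | _, _, [] => []
  | y, y', t :: d =>
      tauStep K y y' t ::
        tauAux K (resetStep K (y + t)) (resetStep K (y' + tauStep K y y' t)) d

/-- The rescaling map `τ_{x→x'}` on timestamps. -/
noncomputable def tau (K : ℕ) (x x' : ℝ≥0) (d : Timestamp) : Timestamp :=
  tauAux K (resetStep K x) (resetStep K x') d

/-- Auxiliary rescaling map on timed words. -/
noncomputable def tauWAux {A : Type} (K : ℕ) : ℝ≥0 → ℝ≥0 → TimedWord A → TimedWord A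
  | _, _, [] => []
  | y, y', (t, a) :: w =>
      (tauStep K y y' t, a) ::
        tauWAux K (resetStep K (y + t)) (resetStep K (y' + tauStep K y y' t)) w

/-- The rescaling map `τ_{x→x'}` on timed words. -/
noncomputable def tauW {A : Type} (K : ℕ) (x x' : ℝ≥0) (w : TimedWord A) : TimedWord A :=
  tauWAux K (resetStep K x) (resetStep K x') w

/-! ### Residuals and the syntactic equivalence -/

/-- The residual language `u^{-1}L`. -/
def residual {A : Type} (L : Set (TimedWord A)) (u : TimedWord A) : Set (TimedWord A) :=
  {w : TimedWord A | u ++ w ∈ L}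

/-- The syntactic equivalence `≈^{L,K}`. -/
def ApproxLK {A : Type} (L : Set (TimedWord A)) (K : ℕ) (u v : TimedWord A) : Prop :=
  RegEq K (cKW K u) (cKW K v) ∧
    (tauW K (cKW K u) (cKW K v)) '' (residual L u) = residual L v

/-! ### The automaton built from a monotonic equivalence -/

/-- The region guard `φ([t])`. -/
noncomputable def phiOf (K : ℕ) (t : ℝ≥0) : CC :=
  if t ≤ (K : ℝ≥0) then
    (if IsNatVal t then CC.eq ⌊t⌋₊ else CC.and (CC.gt ⌊t⌋₊) (CC.lt (⌊t⌋₊ + 1)))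
  else CC.gt K

/-- The automaton `A_≈` built from an equivalence `s` on timed words. -/
noncomputable def Aapprox {A : Type} (L : Set (TimedWord A)) (K : ℕ)
    (s : Setoid (TimedWord A)) : TA A where
  Q := Quotient s
  init := Quotient.mk s ([] : TimedWord A)
  final := {q : Quotient s | ∃ u : TimedWord A, q = Quotient.mk s u ∧ u ∈ L}
  trans := {θ : TTrans (Quotient s) A |
    ∃ (u : TimedWord A) (a : A) (t : ℝ≥0),
      θ.src = Quotient.mk s u ∧ θ.dst = Quotient.mk s (u ++ [(t, a)]) ∧ θ.lab = a ∧
      θ.guard = phiOf K (cKW K u + t) ∧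
      (θ.reset = true ↔ ∃ m : ℕ, m ≤ K ∧ cKW K u + t = (m : ℝ≥0))}

/-! ### Half-integral and small words -/

/-- Every delay has fractional part `0` or `1/2`. -/
def HalfIntegral {A : Type} (w : TimedWord A) : Prop :=
  ∀ p ∈ w, fracPart p.1 = 0 ∨ fracPart p.1 = 1 / 2

/-- Every delay is `< K + 1`. -/
def SmallWord {A : Type} (K : ℕ) (w : TimedWord A) : Prop :=
  ∀ p ∈ w, p.1 < (K : ℝ≥0) + 1

/-- The delays of `Σ_K`: half-integral values `≤ K + 1/2`. -/
def IsSigmaK (K : ℕ) (t : ℝ≥0) : Prop :=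
  (fracPart t = 0 ∨ fracPart t = 1 / 2) ∧ t ≤ (K : ℝ≥0) + 1 / 2

/-- Words over `Σ_K` (small half-integral words). -/
def SigmaWord {A : Type} (K : ℕ) (w : TimedWord A) : Prop :=
  ∀ p ∈ w, IsSigmaK K p.1



/-! ### `K`-acceptors with their region representatives -/

/-- A `K`-acceptor bundled with the half-integral representative of the
unique region of each state. -/
structure KAcc (A : Type) (K : ℕ) where
  M : TA A
  acc : IsKAcceptor M K
  reg : M.Q → ℝ≥0
  regHalf : ∀ q : M.Q, fracPart (reg q) = 0 ∨ fracPart (reg q) = 1 / 2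
  regLe : ∀ q : M.Q, reg q ≤ (K : ℝ≥0) + 1 / 2
  regSpec : ∀ (w : TimedWord A) (q : M.Q) (x : ℝ≥0),
    Steps M (M.init, 0) w (q, x) → RegEq K x (reg q)

/-- The minimization equivalences `∼^i` on the states of a `K`-acceptor. -/
def simEq {A : Type} {K : ℕ} (B : KAcc A K) : ℕ → B.M.Q → B.M.Q → Prop
  | 0, p, q => B.reg p = B.reg q ∧ (p ∈ B.M.final ↔ q ∈ B.M.final)
  | i + 1, p, q => simEq B i p q ∧
      ∀ (t : ℝ≥0) (a : A), IsSigmaK K t →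
        ∀ θ₁ θ₂ : TTrans B.M.Q A, θ₁ ∈ B.M.trans → θ₂ ∈ B.M.trans →
          θ₁.src = p → θ₂.src = q → θ₁.lab = a → θ₂.lab = a →
          θ₁.guard = phiOf K t → θ₂.guard = phiOf K t →
          simEq B i θ₁.dst θ₂.dst

/-- The quotient automaton `B/∼^m`. -/
noncomputable def quotTA {A : Type} {K : ℕ} (B : KAcc A K) (m : ℕ) : TA A where
  Q := Quot (simEq B m)
  init := Quot.mk (simEq B m) B.M.init
  final := {c : Quot (simEq B m) | ∃ q ∈ B.M.final, c = Quot.mk (simEq B m) q}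
  trans := {θ : TTrans (Quot (simEq B m)) A |
    ∃ θ₀ ∈ B.M.trans,
      θ.src = Quot.mk (simEq B m) θ₀.src ∧ θ.dst = Quot.mk (simEq B m) θ₀.dst ∧
      θ.lab = θ₀.lab ∧ θ.guard = θ₀.guard ∧ θ.reset = θ₀.reset}

/-! ### Observation tables -/

/-- An observation table over `Σ_K`. -/
structure ObsTable (A : Type) (K : ℕ) where
  U1 : Set (TimedWord A)
  E : Set (TimedWord A)
  val : TimedWord A → TimedWord A → Bool
  U1fin : U1.Finite
  Efin : E.Finite
  U1sigma : ∀ u ∈ U1, SigmaWord K u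
  Esigma : ∀ e ∈ E, SigmaWord K e
  epsU1 : ([] : TimedWord A) ∈ U1
  prefixClosed : ∀ (u : TimedWord A) (x : ℝ≥0 × A), u ++ [x] ∈ U1 → u ∈ U1
  epsE : ([] : TimedWord A) ∈ E
  suffixClosed : ∀ (x : ℝ≥0 × A) (e : TimedWord A), x :: e ∈ E → e ∈ E

/-- The set `U2` of one-letter `Σ_K`-extensions of `U1`. -/
def obsU2 {A : Type} {K : ℕ} (T : ObsTable A K) : Set (TimedWord A) :=
  {w : TimedWord A | ∃ u ∈ T.U1, ∃ (t : ℝ≥0) (a : A), IsSigmaK K t ∧ w = u ++ [(t, a)]}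

/-- `R(u)`: the row of `u` (restricted to `E`) together with `c^K_⊤(u)`. -/
noncomputable def Rof {A : Type} {K : ℕ} (T : ObsTable A K) (u : TimedWord A) :
    ({e : TimedWord A // e ∈ T.E} → Bool) × WithTop ℝ≥0 :=
  (fun e => T.val u e.1, cKTop K u)

/-- The table is closed. -/
def ObsTable.Closed {A : Type} {K : ℕ} (T : ObsTable A K) : Prop :=
  ∀ w ∈ obsU2 T, ∃ u ∈ T.U1, Rof T w = Rof T u

/-- The table is consistent. -/
def ObsTable.Consistent {A : Type} {K : ℕ} (T : ObsTable A K) : Prop :=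
  ∀ u ∈ T.U1, ∀ w ∈ T.U1, Rof T u = Rof T w →
    ∀ (t : ℝ≥0) (a : A), IsSigmaK K t → Rof T (u ++ [(t, a)]) = Rof T (w ++ [(t, a)])

/-- The automaton `A_𝒯` induced by a (closed and consistent) observation table. -/
noncomputable def ATable {A : Type} {K : ℕ} (T : ObsTable A K) : TA A where
  Q := {f : ({e : TimedWord A // e ∈ T.E} → Bool) × WithTop ℝ≥0 // ∃ u ∈ T.U1, f = Rof T u}
  init := ⟨Rof T [], ⟨[], T.epsU1, rfl⟩⟩
  final := {q | ∃ u ∈ T.U1, q.1 = Rof T u ∧ T.val u [] = true}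
  trans := {θ | ∃ u ∈ T.U1, ∃ (t : ℝ≥0) (a : A), IsSigmaK K t ∧
      θ.src.1 = Rof T u ∧ θ.dst.1 = Rof T (u ++ [(t, a)]) ∧ θ.lab = a ∧
      θ.guard = phiOf K (cKW K u + t) ∧
      (θ.reset = true ↔ ∃ m : ℕ, m ≤ K ∧ cKW K u + t = (m : ℝ≥0))}

/-- A `K`-acceptor is consistent with the observation table `𝒯`. -/
def ConsistentWith {A : Type} {K : ℕ} (M : TA A) (T : ObsTable A K) : Prop :=
  ∀ w : TimedWord A, (w ∈ T.U1 ∨ w ∈ obsU2 T) → ∀ e ∈ T.E,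
    ∀ (q : M.Q) (ν : ℝ≥0), Steps M (M.init, 0) (w ++ e) (q, ν) →
      (q ∈ M.final ↔ T.val w e = true)

/-- Isomorphism of one-clock timed automata. -/
structure TAIso {A : Type} (M N : TA A) where
  toEquiv : M.Q ≃ N.Q
  init_eq : toEquiv M.init = N.init
  final_iff : ∀ q : M.Q, q ∈ M.final ↔ toEquiv q ∈ N.final
  trans_iff : ∀ θ : TTrans M.Q A,
    θ ∈ M.trans ↔
      (⟨toEquiv θ.src, toEquiv θ.dst, θ.lab, θ.guard, θ.reset⟩ : TTrans N.Q A) ∈ N.trans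

/-!
Only the backward direction needs work. `≈^B` refines `≈^{L,K}`: strict guards with constants at
most `K` cannot tell region-equivalent clock values apart, and `τ` keeps `x + t` and `x' + τ(t)` in
the same region, so the residuals from a common state correspond under `τ`. `≈^{L,K}` is an
equivalence because `τ_{y→z} ∘ τ_{x→y} = τ_{x→z}` and `τ_{x→x} = id`. Finally, every run of `B`
can be replayed with delays in `Σ_K` by steering the clock, at each step, to the half-integral
representative of the region reached; so every word is `≈^B`-equivalent to a small half-integral
one, and the hypothesis on such words transfers to all words by transitivity.
-/

lemma floor_add_fracPart (x : ℝ≥0) : (⌊x⌋₊ : ℝ≥0) + fracPart x = x :=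
  add_tsub_cancel_of_le (Nat.floor_le (zero_le (a := x)))

lemma fracPart_lt_one (x : ℝ≥0) : fracPart x < 1 :=
  (tsub_lt_iff_left (Nat.floor_le (zero_le (a := x)))).mpr (Nat.lt_floor_add_one x)

lemma fracPart_natCast (n : ℕ) : fracPart (n : ℝ≥0) = 0 := by
  simp [fracPart]

lemma eq_floor_of_fracPart_eq_zero {x : ℝ≥0} (h : fracPart x = 0) : x = ⌊x⌋₊ := by
  conv_lhs => rw [← floor_add_fracPart x, h, add_zero]

lemma fracPart_eq_zero_iff {x : ℝ≥0} : fracPart x = 0 ↔ IsNatVal x :=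
  ⟨fun h => ⟨⌊x⌋₊, eq_floor_of_fracPart_eq_zero h⟩, by rintro ⟨m, rfl⟩; exact fracPart_natCast m⟩

lemma floor_natCast_add {n : ℕ} {f : ℝ≥0} (hf : f < 1) : ⌊(n : ℝ≥0) + f⌋₊ = n := by
  rw [add_comm, Nat.floor_add_natCast zero_le, Nat.floor_eq_zero.mpr hf, zero_add]

lemma fracPart_natCast_add {n : ℕ} {f : ℝ≥0} (hf : f < 1) : fracPart ((n : ℝ≥0) + f) = f := by
  rw [fracPart, floor_natCast_add hf, add_tsub_cancel_left]

lemma eq_natCast_iff_floor {x : ℝ≥0} {m : ℕ} : x = m ↔ ⌊x⌋₊ = m ∧ fracPart x = 0 := by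
  constructor
  · rintro rfl
    exact ⟨Nat.floor_natCast m, fracPart_natCast m⟩
  · rintro ⟨h1, h2⟩
    rw [eq_floor_of_fracPart_eq_zero h2, h1]

lemma natCast_lt_iff_floor {x : ℝ≥0} {m : ℕ} :
    (m : ℝ≥0) < x ↔ m < ⌊x⌋₊ ∨ (⌊x⌋₊ = m ∧ fracPart x ≠ 0) := by
  constructor
  · intro h
    rcases lt_or_ge m ⌊x⌋₊ with h' | h'
    · exact Or.inl h'
    · have hm : ⌊x⌋₊ = m := le_antisymm h' (Nat.le_floor h.le)
      exact Or.inr ⟨hm, fun hz => h.ne' (eq_natCast_iff_floor.mpr ⟨hm, hz⟩)⟩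
  · rintro (h | ⟨h1, h2⟩)
    · exact lt_of_lt_of_le (by exact_mod_cast h) (Nat.floor_le (zero_le (a := x)))
    · refine lt_of_le_of_ne (h1 ▸ Nat.floor_le (zero_le (a := x))) fun hx => h2 ?_
      rw [← hx, fracPart_natCast]

lemma fracPart_add_of_lt_one {x t : ℝ≥0} (h : fracPart x + fracPart t < 1) :
    ⌊x + t⌋₊ = ⌊x⌋₊ + ⌊t⌋₊ ∧ fracPart (x + t) = fracPart x + fracPart t := by
  have hd : x + t = ((⌊x⌋₊ + ⌊t⌋₊ : ℕ) : ℝ≥0) + (fracPart x + fracPart t) := by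
    push_cast
    rw [add_add_add_comm, floor_add_fracPart, floor_add_fracPart]
  rw [hd]
  exact ⟨floor_natCast_add h, fracPart_natCast_add h⟩

lemma fracPart_add_of_one_le {x t : ℝ≥0} (h : 1 ≤ fracPart x + fracPart t) :
    ⌊x + t⌋₊ = ⌊x⌋₊ + ⌊t⌋₊ + 1 ∧ fracPart (x + t) = fracPart x + fracPart t - 1 := by
  have hlt : fracPart x + fracPart t - 1 < 1 := by
    rw [tsub_lt_iff_left h]
    exact add_lt_add (fracPart_lt_one x) (fracPart_lt_one t)
  have hd : x + t = ((⌊x⌋₊ + ⌊t⌋₊ + 1 : ℕ) : ℝ≥0) + (fracPart x + fracPart t - 1) := by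
    push_cast
    rw [add_assoc ((⌊x⌋₊ : ℝ≥0) + ⌊t⌋₊), add_tsub_cancel_of_le h, add_add_add_comm,
      floor_add_fracPart, floor_add_fracPart]
  rw [hd]
  exact ⟨floor_natCast_add hlt, fracPart_natCast_add hlt⟩

lemma one_sub_fracPart_pos (x : ℝ≥0) : 0 < 1 - fracPart x :=
  tsub_pos_of_lt (fracPart_lt_one x)

lemma one_sub_fracPart_lt_one {x : ℝ≥0} (h : fracPart x ≠ 0) : 1 - fracPart x < 1 :=
  tsub_lt_self one_pos (pos_iff_ne_zero.mpr h)

section RegEq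

variable {K : ℕ} {x y z : ℝ≥0}

lemma RegEq.refl (K : ℕ) (x : ℝ≥0) : RegEq K x x := Or.inl ⟨rfl, Iff.rfl⟩

lemma RegEq.symm (h : RegEq K x y) : RegEq K y x := by
  rcases h with ⟨h1, h2⟩ | ⟨h1, h2⟩
  · exact Or.inl ⟨h1.symm, h2.symm⟩
  · exact Or.inr ⟨h2, h1⟩

lemma RegEq.natCast_lt_iff (h : RegEq K x y) : (K : ℝ≥0) < x ↔ (K : ℝ≥0) < y := by
  rcases h with ⟨h1, h2⟩ | ⟨h1, h2⟩
  · simp only [natCast_lt_iff_floor, h1, ne_eq, h2]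
  · exact iff_of_true h1 h2

lemma RegEq.trans (h : RegEq K x y) (h' : RegEq K y z) : RegEq K x z := by
  rcases h with ⟨h1, h2⟩ | ⟨h1, h2⟩
  · rcases h' with ⟨h3, h4⟩ | ⟨h3, h4⟩
    · exact Or.inl ⟨h1.trans h3, h2.trans h4⟩
    · exact Or.inr ⟨(RegEq.natCast_lt_iff (Or.inl ⟨h1, h2⟩)).mpr h3, h4⟩
  · exact Or.inr ⟨h1, (h'.natCast_lt_iff).mp h2⟩

lemma RegEq.eq_natCast_iff (h : RegEq K x y) {m : ℕ} (hm : m ≤ K) :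
    x = m ↔ y = m := by
  have hm' : ¬ (K : ℝ≥0) < m := not_lt.mpr (by exact_mod_cast hm)
  rcases h with ⟨h1, h2⟩ | ⟨h1, h2⟩
  · rw [eq_natCast_iff_floor, eq_natCast_iff_floor, h1, h2]
  · exact iff_of_false (fun h => hm' (h ▸ h1)) (fun h => hm' (h ▸ h2))

lemma resetStep_of_exists {v : ℝ≥0} (h : ∃ m : ℕ, m ≤ K ∧ v = m) : resetStep K v = 0 :=
  if_pos h

lemma resetStep_of_not_exists {v : ℝ≥0} (h : ¬ ∃ m : ℕ, m ≤ K ∧ v = m) : resetStep K v = v :=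
  if_neg h

lemma resetStep_zero : resetStep K 0 = 0 :=
  resetStep_of_exists ⟨0, Nat.zero_le K, Nat.cast_zero.symm⟩

lemma resetStep_idem (v : ℝ≥0) : resetStep K (resetStep K v) = resetStep K v := by
  by_cases h : ∃ m : ℕ, m ≤ K ∧ v = m
  · rw [resetStep_of_exists h, resetStep_zero]
  · rw [resetStep_of_not_exists h, resetStep_of_not_exists h]

lemma RegEq.map_resetStep (h : RegEq K x y) : RegEq K (resetStep K x) (resetStep K y) := by
  have hiff : (∃ m : ℕ, m ≤ K ∧ x = m) ↔ ∃ m : ℕ, m ≤ K ∧ y = m :=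
    exists_congr fun m => and_congr_right fun hm => h.eq_natCast_iff hm
  by_cases hx : ∃ m : ℕ, m ≤ K ∧ x = m
  · rw [resetStep_of_exists hx, resetStep_of_exists (hiff.mp hx)]
    exact RegEq.refl K 0
  · rw [resetStep_of_not_exists hx, resetStep_of_not_exists (mt hiff.mpr hx)]
    exact h

lemma RegEq.cases_of_resetStep (hx : resetStep K x = x) (hy : resetStep K y = y)
    (h : RegEq K x y) :
    (x = 0 ∧ y = 0) ∨ ((K : ℝ≥0) < x ∧ (K : ℝ≥0) < y) ∨
      (⌊x⌋₊ = ⌊y⌋₊ ∧ fracPart x ≠ 0 ∧ fracPart y ≠ 0 ∧ ¬ (K : ℝ≥0) < x ∧ ¬ (K : ℝ≥0) < y) := by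
  by_cases hKx : (K : ℝ≥0) < x
  · exact Or.inr (Or.inl ⟨hKx, h.natCast_lt_iff.mp hKx⟩)
  have hKy : ¬ (K : ℝ≥0) < y := mt h.natCast_lt_iff.mpr hKx
  rcases h with ⟨hfl, hfr⟩ | ⟨hK, _⟩
  · by_cases hx0 : fracPart x = 0
    · have hxK : ⌊x⌋₊ ≤ K := Nat.floor_le_of_le (not_lt.mp hKx)
      have reset_zero {v : ℝ≥0} (hv : resetStep K v = v) (h0 : fracPart v = 0)
          (hvK : ⌊v⌋₊ ≤ K) : v = 0 :=
        hv.symm.trans (resetStep_of_exists ⟨_, hvK, eq_floor_of_fracPart_eq_zero h0⟩)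
      exact Or.inl ⟨reset_zero hx hx0 hxK, reset_zero hy (hfr.mp hx0) (hfl ▸ hxK)⟩
    · exact Or.inr (Or.inr ⟨hfl, hx0, mt hfr.mpr hx0, hKx, hKy⟩)
  · exact absurd hK hKx

end RegEq

section fScale

variable {lam lam' : ℝ≥0}

lemma fScale_of_le {t : ℝ≥0} (ht : t ≤ lam) : fScale lam lam' t = lam' / lam * t :=
  if_pos ht

lemma fScale_of_lt {t : ℝ≥0} (ht : lam < t) :
    fScale lam lam' t = lam' + (1 - lam') / (1 - lam) * (t - lam) :=
  if_neg (not_le.mpr ht)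

lemma fScale_left (h0 : 0 < lam) : fScale lam lam' lam = lam' := by
  rw [fScale_of_le le_rfl, div_mul_cancel₀ _ h0.ne']

lemma fScale_one (h1 : lam < 1) (h1' : lam' ≤ 1) : fScale lam lam' 1 = 1 := by
  rw [fScale_of_lt h1, div_mul_cancel₀ _ (tsub_pos_of_lt h1).ne', add_tsub_cancel_of_le h1']

lemma fScale_self (h0 : 0 < lam) (h1 : lam < 1) (t : ℝ≥0) : fScale lam lam t = t := by
  rcases le_or_gt t lam with ht | ht
  · rw [fScale_of_le ht, div_self h0.ne', one_mul]
  · rw [fScale_of_lt ht, div_self (tsub_pos_of_lt h1).ne', one_mul, add_tsub_cancel_of_le ht.le]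

variable (h0 : 0 < lam) (h1 : lam < 1) (h0' : 0 < lam') (h1' : lam' < 1)
include h0 h1 h0' h1'

lemma fScale_strictMono : StrictMono (fScale lam lam') := by
  have hc : 0 < (1 - lam') / (1 - lam) := div_pos (tsub_pos_of_lt h1') (tsub_pos_of_lt h1)
  intro a b hab
  rcases le_or_gt b lam with hb | hb
  · rw [fScale_of_le (hab.le.trans hb), fScale_of_le hb]
    exact mul_lt_mul_of_pos_left hab (div_pos h0' h0)
  rcases le_or_gt a lam with ha | ha
  · calc fScale lam lam' a ≤ fScale lam lam' lam := by
          rw [fScale_of_le ha, fScale_of_le le_rfl]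
          exact mul_le_mul_of_nonneg_left ha zero_le
      _ = lam' := fScale_left h0
      _ < fScale lam lam' b := by
          rw [fScale_of_lt hb]
          exact lt_add_of_pos_right _ (mul_pos hc (tsub_pos_of_lt hb))
  · rw [fScale_of_lt ha, fScale_of_lt hb]
    exact add_lt_add_right (mul_lt_mul_of_pos_left (tsub_lt_tsub_right_of_le ha.le hab) hc) _

lemma fScale_lt_one {t : ℝ≥0} (ht : t < 1) : fScale lam lam' t < 1 :=
  fScale_one h1 h1'.le ▸ fScale_strictMono h0 h1 h0' h1' ht

lemma le_fScale_iff {t : ℝ≥0} : lam' ≤ fScale lam lam' t ↔ lam ≤ t := by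
  have h := (fScale_strictMono h0 h1 h0' h1').le_iff_le (a := lam) (b := t)
  rwa [fScale_left h0] at h

lemma fScale_eq_iff {t : ℝ≥0} : fScale lam lam' t = lam' ↔ t = lam := by
  have h := (fScale_strictMono h0 h1 h0' h1').injective.eq_iff (a := t) (b := lam)
  rwa [fScale_left h0] at h

lemma fScale_fScale {lam'' : ℝ≥0} (t : ℝ≥0) :
    fScale lam' lam'' (fScale lam lam' t) = fScale lam lam'' t := by
  rcases le_or_gt t lam with ht | ht
  · have h : fScale lam lam' t ≤ lam' :=
      by simpa only [fScale_left h0] using (fScale_strictMono h0 h1 h0' h1').monotone ht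
    rw [fScale_of_le h, fScale_of_le ht, fScale_of_le ht, ← mul_assoc, div_mul_div_comm,
      mul_comm lam'' lam', mul_div_mul_left _ _ h0'.ne']
  · have h : lam' < fScale lam lam' t :=
      by simpa only [fScale_left h0] using fScale_strictMono h0 h1 h0' h1' ht
    rw [fScale_of_lt h, fScale_of_lt ht, fScale_of_lt ht, add_tsub_cancel_left, ← mul_assoc,
      div_mul_div_comm, mul_comm (1 - lam'') (1 - lam'),
      mul_div_mul_left _ _ (tsub_pos_of_lt h1').ne']

end fScale

lemma regEq_add_of_carry_iff {K : ℕ} {x y t t' : ℝ≥0} (hfl : ⌊x⌋₊ = ⌊y⌋₊)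
    (hft : ⌊t⌋₊ = ⌊t'⌋₊) (hx : fracPart x ≠ 0) (hy : fracPart y ≠ 0)
    (hle : 1 - fracPart x ≤ fracPart t ↔ 1 - fracPart y ≤ fracPart t')
    (heq : fracPart t = 1 - fracPart x ↔ fracPart t' = 1 - fracPart y) :
    RegEq K (x + t) (y + t') := by
  have eq_iff (v s : ℝ≥0) : fracPart s = 1 - fracPart v ↔ fracPart v + fracPart s = 1 := by
    rw [eq_tsub_iff_add_eq_of_le (fracPart_lt_one v).le, add_comm]
  rw [tsub_le_iff_left, tsub_le_iff_left] at hle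
  rw [eq_iff, eq_iff] at heq
  refine Or.inl ?_
  by_cases hc : 1 ≤ fracPart x + fracPart t
  · obtain ⟨e1, e2⟩ := fracPart_add_of_one_le hc
    obtain ⟨e1', e2'⟩ := fracPart_add_of_one_le (hle.mp hc)
    rw [e1, e1', e2, e2', hfl, hft, tsub_eq_zero_iff_le, tsub_eq_zero_iff_le,
      ← le_antisymm_iff.trans (and_iff_left hc), ← le_antisymm_iff.trans
        (and_iff_left (hle.mp hc))]
    exact ⟨rfl, heq⟩
  · obtain ⟨e1, e2⟩ := fracPart_add_of_lt_one (not_le.mp hc)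
    obtain ⟨e1', e2'⟩ := fracPart_add_of_lt_one (not_le.mp (mt hle.mpr hc))
    rw [e1, e1', e2, e2', hfl, hft]
    exact ⟨rfl, iff_of_false (fun h => hx (add_eq_zero.mp h).1)
      (fun h => hy (add_eq_zero.mp h).1)⟩

section tauStep

variable {K : ℕ} {x y z : ℝ≥0}

lemma tauStep_of_isNatVal (hx : IsNatVal x) (hy : IsNatVal y) (t : ℝ≥0) :
    tauStep K x y t = t :=
  if_pos (Or.inl ⟨hx, hy⟩)

lemma tauStep_of_lt (hx : (K : ℝ≥0) < x) (hy : (K : ℝ≥0) < y) (t : ℝ≥0) :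
    tauStep K x y t = t :=
  if_pos (Or.inr ⟨hx, hy⟩)

lemma tauStep_of_fracPart_ne_zero (hx : fracPart x ≠ 0) (hKx : ¬ (K : ℝ≥0) < x) (t : ℝ≥0) :
    tauStep K x y t = ⌊t⌋₊ + fScale (1 - fracPart x) (1 - fracPart y) (fracPart t) :=
  if_neg (by rintro (⟨hn, -⟩ | ⟨h, -⟩); exacts [hx (fracPart_eq_zero_iff.mpr hn), hKx h])

lemma tauStep_self (x t : ℝ≥0) : tauStep K x x t = t := by
  by_cases hKx : (K : ℝ≥0) < x
  · exact tauStep_of_lt hKx hKx t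
  by_cases hx : fracPart x = 0
  · exact tauStep_of_isNatVal (fracPart_eq_zero_iff.mp hx) (fracPart_eq_zero_iff.mp hx) t
  · rw [tauStep_of_fracPart_ne_zero hx hKx,
      fScale_self (one_sub_fracPart_pos x) (one_sub_fracPart_lt_one hx), floor_add_fracPart]

lemma fScale_fracPart_lt_one (hx : fracPart x ≠ 0) (hy : fracPart y ≠ 0) (t : ℝ≥0) :
    fScale (1 - fracPart x) (1 - fracPart y) (fracPart t) < 1 :=
  fScale_lt_one (one_sub_fracPart_pos x) (one_sub_fracPart_lt_one hx) (one_sub_fracPart_pos y)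
    (one_sub_fracPart_lt_one hy) (fracPart_lt_one t)

lemma RegEq.add_tauStep (hx : resetStep K x = x) (hy : resetStep K y = y) (h : RegEq K x y)
    (t : ℝ≥0) : RegEq K (x + t) (y + tauStep K x y t) := by
  rcases h.cases_of_resetStep hx hy with ⟨rfl, rfl⟩ | ⟨hKx, hKy⟩ | ⟨hfl, hfx, hfy, hKx, -⟩
  · rw [tauStep_self]
    exact RegEq.refl K _
  · rw [tauStep_of_lt hKx hKy]
    exact Or.inr ⟨hKx.trans_le le_self_add, hKy.trans_le le_self_add⟩
  · have hlt := fScale_fracPart_lt_one hfx hfy t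
    have hlam := one_sub_fracPart_pos x
    have hlam1 := one_sub_fracPart_lt_one hfx
    have hlam' := one_sub_fracPart_pos y
    have hlam'1 := one_sub_fracPart_lt_one hfy
    rw [tauStep_of_fracPart_ne_zero hfx hKx]
    refine regEq_add_of_carry_iff hfl (floor_natCast_add hlt).symm hfx hfy ?_ ?_ <;>
      rw [fracPart_natCast_add hlt]
    · exact (le_fScale_iff hlam hlam1 hlam' hlam'1).symm
    · exact (fScale_eq_iff hlam hlam1 hlam' hlam'1).symm

lemma tauStep_tauStep (hx : resetStep K x = x) (hy : resetStep K y = y)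
    (hz : resetStep K z = z) (hxy : RegEq K x y) (hyz : RegEq K y z) (t : ℝ≥0) :
    tauStep K y z (tauStep K x y t) = tauStep K x z t := by
  rcases hxy.cases_of_resetStep hx hy with ⟨rfl, rfl⟩ | ⟨hKx, hKy⟩ | ⟨-, hfx, hfy, hKx, hKy⟩
  · obtain rfl : z = 0 := by
      simpa using (hyz.eq_natCast_iff (m := 0) (Nat.zero_le K)).mp Nat.cast_zero.symm
    simp only [tauStep_self]
  · have hKz := hyz.natCast_lt_iff.mp hKy
    rw [tauStep_of_lt hKx hKy, tauStep_of_lt hKy hKz, tauStep_of_lt hKx hKz]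
  · obtain ⟨hfz, hKz⟩ : fracPart z ≠ 0 ∧ ¬ (K : ℝ≥0) < z := by
      rcases hyz.cases_of_resetStep hy hz with ⟨rfl, -⟩ | ⟨hKy', -⟩ | ⟨-, -, hfz, -, hKz⟩
      · exact absurd (by simpa using fracPart_natCast 0) hfy
      · exact absurd hKy' hKy
      · exact ⟨hfz, hKz⟩
    have hlt := fScale_fracPart_lt_one hfx hfy t
    rw [tauStep_of_fracPart_ne_zero hfx hKx, tauStep_of_fracPart_ne_zero hfy hKy,
      tauStep_of_fracPart_ne_zero hfx hKx, floor_natCast_add hlt, fracPart_natCast_add hlt,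
      fScale_fScale (one_sub_fracPart_pos x) (one_sub_fracPart_lt_one hfx)
        (one_sub_fracPart_pos y) (one_sub_fracPart_lt_one hfy)]

end tauStep

section tauWAux

variable {A : Type} {K : ℕ} {x y z : ℝ≥0}

lemma tauWAux_self (x : ℝ≥0) (w : TimedWord A) : tauWAux K x x w = w := by
  induction w generalizing x with
  | nil => rfl
  | cons p w ih =>
    obtain ⟨t, a⟩ := p
    simp only [tauWAux, tauStep_self, ih]

lemma tauWAux_tauWAux (hx : resetStep K x = x) (hy : resetStep K y = y)
    (hz : resetStep K z = z) (hxy : RegEq K x y) (hyz : RegEq K y z) (w : TimedWord A) :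
    tauWAux K y z (tauWAux K x y w) = tauWAux K x z w := by
  induction w generalizing x y z with
  | nil => rfl
  | cons p w ih =>
    obtain ⟨t, a⟩ := p
    have hxy' := (hxy.add_tauStep hx hy t).map_resetStep
    have hyz' := (hyz.add_tauStep hy hz (tauStep K x y t)).map_resetStep
    rw [tauStep_tauStep hx hy hz hxy hyz] at hyz'
    simp only [tauWAux, tauStep_tauStep hx hy hz hxy hyz]
    rw [ih (resetStep_idem _) (resetStep_idem _) (resetStep_idem _) hxy' hyz']

lemma tauWAux_tauWAux_symm (hx : resetStep K x = x) (hy : resetStep K y = y)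
    (hxy : RegEq K x y) (w : TimedWord A) : tauWAux K y x (tauWAux K x y w) = w := by
  rw [tauWAux_tauWAux hx hy hx hxy hxy.symm, tauWAux_self]

end tauWAux

lemma resetStep_cKAux (K : ℕ) (d : Timestamp) {v : ℝ≥0} (hv : resetStep K v = v) :
    resetStep K (cKAux K v d) = cKAux K v d := by
  induction d generalizing v with
  | nil => exact hv
  | cons _ _ ih => exact ih (resetStep_idem _)

lemma resetStep_cKW {A : Type} (K : ℕ) (u : TimedWord A) : resetStep K (cKW K u) = cKW K u :=
  resetStep_cKAux K _ resetStep_zero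

lemma tauW_cKW {A : Type} (K : ℕ) (u v : TimedWord A) :
    (tauW K (cKW K u) (cKW K v) : TimedWord A → TimedWord A) =
      tauWAux K (cKW K u) (cKW K v) := by
  funext w
  rw [tauW, resetStep_cKW, resetStep_cKW]

section Runs

variable {A : Type} {M : TA A}

lemma steps_nil_iff {c c' : M.Q × ℝ≥0} : Steps M c [] c' ↔ c' = c :=
  ⟨fun h => by cases h; rfl, by rintro rfl; exact Steps.nil _⟩

lemma steps_cons_iff {q : M.Q} {ν t : ℝ≥0} {a : A} {w : TimedWord A} {c : M.Q × ℝ≥0} :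
    Steps M (q, ν) ((t, a) :: w) c ↔
      ∃ θ ∈ M.trans, θ.src = q ∧ θ.lab = a ∧ θ.guard.sat (ν + t) ∧
        Steps M (θ.dst, if θ.reset then 0 else ν + t) w c := by
  constructor
  · rintro (_ | ⟨θ, hθ, hsrc, hlab, hg, hrest⟩)
    exact ⟨θ, hθ, hsrc, hlab, hg, hrest⟩
  · rintro ⟨θ, hθ, hsrc, hlab, hg, hrest⟩
    exact Steps.cons θ hθ hsrc hlab hg hrest

lemma steps_append_iff {u w : TimedWord A} {c₁ c₂ : M.Q × ℝ≥0} :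
    Steps M c₁ (u ++ w) c₂ ↔ ∃ c, Steps M c₁ u c ∧ Steps M c w c₂ := by
  induction u generalizing c₁ with
  | nil => simp only [List.nil_append, steps_nil_iff, exists_eq_left]
  | cons p u ih =>
    obtain ⟨t, a⟩ := p
    obtain ⟨q, ν⟩ := c₁
    simp only [List.cons_append, steps_cons_iff, ih]
    constructor
    · rintro ⟨θ, hθ, hsrc, hlab, hg, c, hc1, hc2⟩
      exact ⟨c, ⟨θ, hθ, hsrc, hlab, hg, hc1⟩, hc2⟩
    · rintro ⟨c, ⟨θ, hθ, hsrc, hlab, hg, hc1⟩, hc2⟩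
      exact ⟨θ, hθ, hsrc, hlab, hg, c, hc1, hc2⟩

lemma Steps.unique (hdet : M.Deterministic) {w : TimedWord A} {c c₁ c₂ : M.Q × ℝ≥0}
    (h₁ : Steps M c w c₁) (h₂ : Steps M c w c₂) : c₁ = c₂ := by
  induction w generalizing c with
  | nil => rw [steps_nil_iff.mp h₁, steps_nil_iff.mp h₂]
  | cons p w ih =>
    obtain ⟨t, a⟩ := p
    obtain ⟨q, ν⟩ := c
    obtain ⟨θ₁, hθ₁, hs₁, hl₁, hg₁, hr₁⟩ := steps_cons_iff.mp h₁
    obtain ⟨θ₂, hθ₂, hs₂, hl₂, hg₂, hr₂⟩ := steps_cons_iff.mp h₂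
    obtain rfl : θ₁ = θ₂ := by
      by_contra hne
      exact hdet θ₁ hθ₁ θ₂ hθ₂ hne (hs₁.trans hs₂.symm) (hl₁.trans hl₂.symm) _ ⟨hg₁, hg₂⟩
    exact ih hr₁ hr₂

lemma TA.SameState.symm {u v : TimedWord A} (h : M.SameState u v) : M.SameState v u :=
  let ⟨q, ν, ν', hu, hv⟩ := h
  ⟨q, ν', ν, hv, hu⟩

lemma TA.SameState.trans (hdet : M.Deterministic) {u v w : TimedWord A}
    (h₁ : M.SameState u v) (h₂ : M.SameState v w) : M.SameState u w := by
  obtain ⟨q, ν₁, ν₂, hu, hv⟩ := h₁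
  obtain ⟨q', ν₂', ν₃, hv', hw⟩ := h₂
  obtain rfl : q = q' := congrArg Prod.fst (hv.unique hdet hv')
  exact ⟨q, ν₁, ν₃, hu, hw⟩

lemma mem_langFrom_nil {c : M.Q × ℝ≥0} : ([] : TimedWord A) ∈ M.LangFrom c ↔ c.1 ∈ M.final := by
  simp only [TA.LangFrom, Set.mem_ofPred_eq, steps_nil_iff]
  exact ⟨fun ⟨_, _, h, hf⟩ => h ▸ hf, fun hf => ⟨c.1, c.2, rfl, hf⟩⟩

lemma mem_langFrom_cons {q : M.Q} {ν t : ℝ≥0} {a : A} {w : TimedWord A} :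
    (t, a) :: w ∈ M.LangFrom (q, ν) ↔
      ∃ θ ∈ M.trans, θ.src = q ∧ θ.lab = a ∧ θ.guard.sat (ν + t) ∧
        w ∈ M.LangFrom (θ.dst, if θ.reset then 0 else ν + t) := by
  simp only [TA.LangFrom, Set.mem_ofPred_eq, steps_cons_iff]
  constructor
  · rintro ⟨q', ν', ⟨θ, hθ, hsrc, hlab, hg, hrest⟩, hf⟩
    exact ⟨θ, hθ, hsrc, hlab, hg, q', ν', hrest, hf⟩
  · rintro ⟨θ, hθ, hsrc, hlab, hg, q', ν', hrest, hf⟩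
    exact ⟨q', ν', ⟨θ, hθ, hsrc, hlab, hg, hrest⟩, hf⟩

lemma append_mem_lang_iff (hdet : M.Deterministic) {u w : TimedWord A} {c : M.Q × ℝ≥0}
    (hu : Steps M (M.init, 0) u c) : u ++ w ∈ M.Lang ↔ w ∈ M.LangFrom c := by
  simp only [TA.Lang, TA.LangFrom, Set.mem_ofPred_eq, steps_append_iff]
  constructor
  · rintro ⟨q', ν', ⟨c', hu', hw⟩, hf⟩
    exact ⟨q', ν', hu'.unique hdet hu ▸ hw, hf⟩
  · rintro ⟨q', ν', hw, hf⟩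
    exact ⟨q', ν', ⟨c, hu, hw⟩, hf⟩

end Runs

section Strict

variable {A : Type} {M : TA A} {K : ℕ}

lemma CC.sat_interval_iff {m : ℕ} {c : ℝ≥0} :
    (CC.and (.gt m) (.lt (m + 1))).sat c ↔ ⌊c⌋₊ = m ∧ fracPart c ≠ 0 := by
  simp only [CC.sat]
  constructor
  · rintro ⟨h1, h2⟩
    rcases natCast_lt_iff_floor.mp h1 with h3 | h3
    · have h4 : ⌊c⌋₊ < m + 1 := (Nat.floor_lt' m.succ_ne_zero).mpr (by exact_mod_cast h2)
      omega
    · exact h3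
  · rintro ⟨h1, h2⟩
    refine ⟨natCast_lt_iff_floor.mpr (Or.inr ⟨h1, h2⟩), ?_⟩
    exact_mod_cast (Nat.floor_lt' m.succ_ne_zero).mp (by omega)

lemma StrictGuard.sat_iff_of_regEq {φ : CC} (hφ : StrictGuard K φ) (hmax : φ.maxConst ≤ K)
    {a b : ℝ≥0} (h : RegEq K a b) : φ.sat a ↔ φ.sat b := by
  rcases hφ with ⟨m, rfl⟩ | ⟨m, rfl⟩ | rfl
  · exact h.eq_natCast_iff hmax
  · have hm : m + 1 ≤ K := le_trans (le_max_right _ _) hmax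
    rw [CC.sat_interval_iff, CC.sat_interval_iff]
    rcases h with ⟨h1, h2⟩ | ⟨h1, h2⟩
    · rw [h1, ne_eq, h2]
    · have ha := Nat.le_floor h1.le
      have hb := Nat.le_floor h2.le
      exact iff_of_false (fun ⟨h, _⟩ => by omega) (fun ⟨h, _⟩ => by omega)
  · exact h.natCast_lt_iff

lemma TA.IsStrict.clock_eq_resetStep (hstrict : M.IsStrict K) (hmax : M.MaxConstLE K)
    {θ : TTrans M.Q A} (hθ : θ ∈ M.trans) {v : ℝ≥0} (hsat : θ.guard.sat v) :
    (if θ.reset then 0 else v) = resetStep K v := by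
  obtain ⟨hsg, hiff⟩ := hstrict θ hθ
  rcases hsg with ⟨m, hg⟩ | ⟨m, hg⟩ | hg
  · have hmθ := hmax θ hθ
    rw [hg] at hsat hmθ
    rw [if_pos (hiff.mp ⟨m, hg⟩), resetStep_of_exists ⟨m, hmθ, hsat⟩]
  all_goals
    have hr : θ.reset = false := by
      rw [← Bool.not_eq_true, ← hiff, hg]
      rintro ⟨_, ⟨⟩⟩
    rw [hr, if_neg Bool.false_ne_true, resetStep_of_not_exists]
    rintro ⟨k, hk, rfl⟩
    rw [hg] at hsat
    simp only [CC.sat] at hsat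
  · obtain ⟨h1, h2⟩ := hsat
    have : m < k := by exact_mod_cast h1
    have : k < m + 1 := by exact_mod_cast h2
    omega
  · exact not_lt.mpr (Nat.cast_le.mpr hk) hsat

lemma TA.IsStrict.steps_clock_eq (hstrict : M.IsStrict K) (hmax : M.MaxConstLE K)
    {c₁ c₂ : M.Q × ℝ≥0} {w : TimedWord A} (h : Steps M c₁ w c₂) :
    c₂.2 = cKAux K c₁.2 (w.map Prod.fst) := by
  induction h with
  | nil c => rfl
  | cons θ hθ _ _ hg _ ih =>
    rw [ih, hstrict.clock_eq_resetStep hmax hθ hg]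
    rfl

lemma TA.IsStrict.mem_langFrom_iff (hstrict : M.IsStrict K) (hmax : M.MaxConstLE K)
    (w : TimedWord A) {q : M.Q} {x y : ℝ≥0} (hx : resetStep K x = x)
    (hy : resetStep K y = y) (h : RegEq K x y) :
    w ∈ M.LangFrom (q, x) ↔ tauWAux K x y w ∈ M.LangFrom (q, y) := by
  induction w generalizing q x y with
  | nil => exact (mem_langFrom_nil (c := (q, x))).trans (mem_langFrom_nil (c := (q, y))).symm
  | cons p w ih =>
    obtain ⟨t, a⟩ := p
    have hreg := h.add_tauStep hx hy t
    simp only [tauWAux, mem_langFrom_cons]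
    refine exists_congr fun θ => and_congr_right fun hθ => and_congr_right fun _ =>
      and_congr_right fun _ => ?_
    have hsat := (hstrict θ hθ).1.sat_iff_of_regEq (hmax θ hθ) hreg
    by_cases hg : θ.guard.sat (x + t)
    · have hg' := hsat.mp hg
      rw [hstrict.clock_eq_resetStep hmax hθ hg, hstrict.clock_eq_resetStep hmax hθ hg']
      exact and_congr (iff_of_true hg hg')
        (ih (resetStep_idem _) (resetStep_idem _) hreg.map_resetStep)
    · exact iff_of_false (fun h' => hg h'.1) (fun h' => hg (hsat.mpr h'.1))

end Strict

section Approx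

variable {A : Type} {L : Set (TimedWord A)} {K : ℕ}

lemma approxLK_iff {u v : TimedWord A} :
    ApproxLK L K u v ↔ RegEq K (cKW K u) (cKW K v) ∧
      ∀ w, w ∈ residual L u ↔ tauWAux K (cKW K u) (cKW K v) w ∈ residual L v := by
  refine and_congr_right fun h => ?_
  have hleft := tauWAux_tauWAux_symm (A := A) (resetStep_cKW K u) (resetStep_cKW K v) h
  have hright := tauWAux_tauWAux_symm (A := A) (resetStep_cKW K v) (resetStep_cKW K u) h.symm
  rw [tauW_cKW, Set.image_eq_preimage_of_inverse hleft hright]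
  constructor
  · intro heq w
    rw [← heq, Set.mem_preimage, hleft]
  · intro hw
    ext z
    rw [Set.mem_preimage, hw, hright]

lemma ApproxLK.symm {u v : TimedWord A} (h : ApproxLK L K u v) : ApproxLK L K v u := by
  obtain ⟨hr, hw⟩ := approxLK_iff.mp h
  refine approxLK_iff.mpr ⟨hr.symm, fun w => ?_⟩
  rw [hw, tauWAux_tauWAux_symm (resetStep_cKW K v) (resetStep_cKW K u) hr.symm]

lemma ApproxLK.trans {u v w : TimedWord A} (h₁ : ApproxLK L K u v) (h₂ : ApproxLK L K v w) :
    ApproxLK L K u w := by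
  obtain ⟨hr₁, hw₁⟩ := approxLK_iff.mp h₁
  obtain ⟨hr₂, hw₂⟩ := approxLK_iff.mp h₂
  refine approxLK_iff.mpr ⟨hr₁.trans hr₂, fun z => ?_⟩
  rw [hw₁, hw₂, tauWAux_tauWAux (resetStep_cKW K u) (resetStep_cKW K v) (resetStep_cKW K w)
    hr₁ hr₂]

lemma TA.SameState.approxLK {B : TA A} (hB : IsKAcceptor B K) {u v : TimedWord A}
    (h : B.SameState u v) : ApproxLK B.Lang K u v := by
  obtain ⟨-, -, hdet, -, hstrict, hmax, hregion⟩ := hB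
  have hreg := hregion u v h
  obtain ⟨q, ν, ν', hu, hv⟩ := h
  obtain rfl : ν = cKW K u := hstrict.steps_clock_eq hmax hu
  obtain rfl : ν' = cKW K v := hstrict.steps_clock_eq hmax hv
  refine approxLK_iff.mpr ⟨hreg, fun w => ?_⟩
  change u ++ w ∈ B.Lang ↔ v ++ _ ∈ B.Lang
  rw [append_mem_lang_iff hdet hu, append_mem_lang_iff hdet hv]
  exact hstrict.mem_langFrom_iff hmax w (resetStep_cKW K u) (resetStep_cKW K v) hreg

end Approx

lemma ceil_eq_floor_add_ite (a : ℝ≥0) : ⌈a⌉₊ = ⌊a⌋₊ + if fracPart a = 0 then 0 else 1 := by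
  split_ifs with h
  · rw [eq_floor_of_fracPart_eq_zero h, Nat.ceil_natCast, Nat.floor_natCast, add_zero]
  · refine (Nat.ceil_eq_iff (Nat.add_one_ne_zero _)).mpr
      ⟨?_, by exact_mod_cast (Nat.lt_floor_add_one a).le⟩
    rw [Nat.add_sub_cancel]
    refine lt_of_le_of_ne (Nat.floor_le zero_le) fun he => h ?_
    rw [← he, fracPart_natCast]

lemma fracPart_natCast_div_two (n : ℕ) :
    fracPart ((n : ℝ≥0) / 2) = 0 ∨ fracPart ((n : ℝ≥0) / 2) = 1 / 2 := by
  obtain ⟨q, rfl | rfl⟩ := Nat.even_or_odd' n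
  · left
    rw [show ((2 * q : ℕ) : ℝ≥0) / 2 = q by push_cast; ring, fracPart_natCast]
  · right
    rw [show ((2 * q + 1 : ℕ) : ℝ≥0) / 2 = q + 1 / 2 by push_cast; ring,
      fracPart_natCast_add (by rw [← NNReal.coe_lt_coe]; norm_num)]

/-- The half-integral representative of the region of `a`: `a` itself if it is an integer
at most `K`, `⌊a⌋ + 1/2` if it is a non-integer below `K`, and `K + 1/2` above `K`. -/
noncomputable def regionRep (K : ℕ) (a : ℝ≥0) : ℝ≥0 :=
  (min (⌊a⌋₊ + ⌈a⌉₊) (2 * K + 1) : ℕ) / 2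

section regionRep

variable {K : ℕ}

lemma regionRep_mono : Monotone (regionRep K) := fun a b hab => by
  unfold regionRep
  gcongr

lemma regionRep_le (a : ℝ≥0) : regionRep K a ≤ K + 1 / 2 := by
  unfold regionRep
  calc ((min (⌊a⌋₊ + ⌈a⌉₊) (2 * K + 1) : ℕ) : ℝ≥0) / 2 ≤ ((2 * K + 1 : ℕ) : ℝ≥0) / 2 := by
        gcongr
        exact min_le_right _ _
    _ = K + 1 / 2 := by push_cast; ring

lemma regionRep_zero : regionRep K 0 = 0 := by
  simp [regionRep]

lemma regEq_regionRep (a : ℝ≥0) : RegEq K a (regionRep K a) := by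
  by_cases hKa : (K : ℝ≥0) < a
  · have hf : K ≤ ⌊a⌋₊ := Nat.le_floor hKa.le
    have hc : K < ⌈a⌉₊ := Nat.lt_ceil.mpr hKa
    refine Or.inr ⟨hKa, ?_⟩
    rw [regionRep, min_eq_right (by omega), ← NNReal.coe_lt_coe]
    push_cast
    linarith
  · have hc : ⌈a⌉₊ ≤ K := Nat.ceil_le.mpr (not_lt.mp hKa)
    have hf : ⌊a⌋₊ ≤ ⌈a⌉₊ := Nat.floor_le_ceil a
    rw [regionRep, min_eq_left (by omega), ceil_eq_floor_add_ite]
    split_ifs with h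
    · rw [show ((⌊a⌋₊ + (⌊a⌋₊ + 0) : ℕ) : ℝ≥0) / 2 = ⌊a⌋₊ by push_cast; ring,
        ← eq_floor_of_fracPart_eq_zero h]
      exact RegEq.refl K a
    · have hhalf : (1 : ℝ≥0) / 2 < 1 := by rw [← NNReal.coe_lt_coe]; norm_num
      rw [show ((⌊a⌋₊ + (⌊a⌋₊ + 1) : ℕ) : ℝ≥0) / 2 = ⌊a⌋₊ + 1 / 2 by push_cast; ring]
      refine Or.inl ⟨(floor_natCast_add hhalf).symm, iff_of_false h ?_⟩
      rw [fracPart_natCast_add hhalf]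
      exact one_div_ne_zero two_ne_zero

lemma regionRep_congr {a b : ℝ≥0} (h : RegEq K a b) : regionRep K a = regionRep K b := by
  rcases h with ⟨hfl, hfr⟩ | ⟨ha, hb⟩
  · have hcl : ⌈a⌉₊ = ⌈b⌉₊ := by simp only [ceil_eq_floor_add_ite, hfl, hfr]
    rw [regionRep, regionRep, hfl, hcl]
  · have key {c : ℝ≥0} (hc : (K : ℝ≥0) < c) : min (⌊c⌋₊ + ⌈c⌉₊) (2 * K + 1) = 2 * K + 1 := by
      have := Nat.le_floor hc.le
      have := Nat.lt_ceil.mpr hc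
      omega
    rw [regionRep, regionRep, key ha, key hb]

lemma regionRep_regionRep (a : ℝ≥0) : regionRep K (regionRep K a) = regionRep K a :=
  (regionRep_congr (regEq_regionRep a)).symm

end regionRep

lemma exists_sigmaK_step {K : ℕ} {x x₀ : ℝ≥0} (hreg : RegEq K x x₀)
    (hx₀ : regionRep K x₀ = x₀) (t : ℝ≥0) :
    ∃ t₀ : ℝ≥0, IsSigmaK K t₀ ∧ RegEq K (x + t) (x₀ + t₀) ∧
      regionRep K (resetStep K (x₀ + t₀)) = resetStep K (x₀ + t₀) := by
  have hle : x₀ ≤ regionRep K (x + t) :=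
    calc x₀ = regionRep K x := hx₀.symm.trans (regionRep_congr hreg.symm)
      _ ≤ regionRep K (x + t) := regionRep_mono le_self_add
  refine ⟨regionRep K (x + t) - x₀, ⟨?_, ?_⟩, ?_, ?_⟩
  · obtain ⟨n, hn⟩ : ∃ n : ℕ, regionRep K (x + t) = n / 2 := ⟨_, rfl⟩
    obtain ⟨m, hm⟩ : ∃ m : ℕ, x₀ = m / 2 := ⟨_, hx₀.symm⟩
    rw [hn, hm, ← tsub_div, ← Nat.cast_tsub]
    exact fracPart_natCast_div_two _
  · exact tsub_le_self.trans (regionRep_le _)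
  · rw [add_tsub_cancel_of_le hle]
    exact regEq_regionRep _
  · rw [add_tsub_cancel_of_le hle]
    by_cases h : ∃ m : ℕ, m ≤ K ∧ regionRep K (x + t) = m
    · rw [resetStep_of_exists h, regionRep_zero]
    · rw [resetStep_of_not_exists h, regionRep_regionRep]

lemma TA.IsStrict.exists_sigmaWord_steps {A : Type} {M : TA A} {K : ℕ}
    (hstrict : M.IsStrict K) (hmax : M.MaxConstLE K) {c₁ c₂ : M.Q × ℝ≥0} {w : TimedWord A}
    (h : Steps M c₁ w c₂) {x₀ : ℝ≥0} (hreg : RegEq K c₁.2 x₀) (hx₀ : regionRep K x₀ = x₀) :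
    ∃ (w₀ : TimedWord A) (ν₀ : ℝ≥0), SigmaWord K w₀ ∧ Steps M (c₁.1, x₀) w₀ (c₂.1, ν₀) := by
  induction h generalizing x₀ with
  | nil c => exact ⟨[], x₀, fun _ h => absurd h List.not_mem_nil, Steps.nil _⟩
  | @cons _ ν t a _ _ θ hθ hsrc hlab hg _ ih =>
    obtain ⟨t₀, ht₀, hreg', hrep⟩ := exists_sigmaK_step hreg hx₀ t
    have hg₀ : θ.guard.sat (x₀ + t₀) := ((hstrict θ hθ).1.sat_iff_of_regEq (hmax θ hθ) hreg').mp hg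
    have hnext : RegEq K (if θ.reset then 0 else ν + t) (resetStep K (x₀ + t₀)) := by
      rw [hstrict.clock_eq_resetStep hmax hθ hg]
      exact hreg'.map_resetStep
    obtain ⟨w₀, ν₀, hw₀, hsteps⟩ := ih hnext hrep
    refine ⟨(t₀, a) :: w₀, ν₀, List.forall_mem_cons.mpr ⟨ht₀, hw₀⟩,
      Steps.cons θ hθ hsrc hlab hg₀ ?_⟩
    rwa [hstrict.clock_eq_resetStep hmax hθ hg₀]

lemma exists_sigmaWord_sameState {A : Type} {K : ℕ} {B : TA A} (hB : IsKAcceptor B K)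
    (u : TimedWord A) : ∃ u₀, SigmaWord K u₀ ∧ B.SameState u u₀ := by
  obtain ⟨-, hcomp, -, -, hstrict, hmax, -⟩ := hB
  obtain ⟨⟨q, ν⟩, hu⟩ := hcomp u
  obtain ⟨u₀, ν₀, hu₀, hsteps⟩ :=
    hstrict.exists_sigmaWord_steps hmax hu (RegEq.refl K 0) regionRep_zero
  exact ⟨u₀, hu₀, q, ν, ν₀, hu, hsteps⟩

theorem statement15_general {A : Type} (K : ℕ) (L : Set (TimedWord A))
    (B : TA A) (hB : IsKAcceptor B K) (hL : B.Lang = L) :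
    (∀ u v : TimedWord A, B.SameState u v ↔ ApproxLK L K u v) ↔
      (∀ u v : TimedWord A, SigmaWord K u → SigmaWord K v →
        (B.SameState u v ↔ ApproxLK L K u v)) := by
  subst hL
  have hdet : B.Deterministic := hB.2.2.1
  refine ⟨fun h u v _ _ => h u v, fun hsmall u v => ⟨fun h => h.approxLK hB, fun h => ?_⟩⟩
  obtain ⟨u₀, hu₀, hu⟩ := exists_sigmaWord_sameState hB u
  obtain ⟨v₀, hv₀, hv⟩ := exists_sigmaWord_sameState hB v
  have h₀ : ApproxLK B.Lang K u₀ v₀ := (hu.approxLK hB).symm.trans (h.trans (hv.approxLK hB))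
  exact hu.trans hdet (((hsmall u₀ v₀ hu₀ hv₀).mpr h₀).trans hdet hv.symm)

/-- `≈^B` coincides with `≈^{L,K}` on all timed words iff it does so
on small half-integral words. -/
theorem statement15 {A : Type} [Finite A] (K : ℕ) (L : Set (TimedWord A))
    (B : TA A) (hB : IsKAcceptor B K) (hL : B.Lang = L) :
    (∀ u v : TimedWord A, B.SameState u v ↔ ApproxLK L K u v) ↔
      (∀ u v : TimedWord A, SigmaWord K u → SigmaWord K v →
        (B.SameState u v ↔ ApproxLK L K u v)) :=
  statement15_general K L B hB hL

end IRTA
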